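/- Let (Ω, P) be a probability space, let z : Ω → ℝ be uniformly distributed on [0,1], let a ∈ ℝ, σ(a) = 1/(1 + exp(−a)), and h = 1_{z < σ(a)}. Let L₁, L₀ : Ω → ℝ be integrable random variables each independent of z, and set L = h·L₁ + (1 − h)·L₀. Then for every constant L̄ ∈ ℝ, the centered estimator satisfies E[(h − σ(a))·(L − L̄)] = E[(h − σ(a))·L] = σ(a)(1 − σ(a))·(E[L₁] − E[L₀]); in particular, the centered estimator is also an unbiased estimator of the derivative of the expected loss with respect to the activation a. -/

import Mathlib

/-!
Since `h` is a `{0,1}`-valued function of `z`, it is an event indicator with `E[h] = σ(a)`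
that is independent of each of `L₁` and `L₀`. Using `h² = h`,
`(h − σ)·L = (1 − σ)·h·L₁ − σ·(1 − h)·L₀`, and independence factors each expectation into
`σ(1 − σ)·E[L₁]` and `σ(1 − σ)·E[L₀]`. The baseline `L̄` drops out because `E[h − σ] = 0`.
-/

open MeasureTheory ProbabilityTheory

/-- The logistic sigmoid `σ(a) = 1/(1 + exp(−a))`. -/
noncomputable def sigmoid (a : ℝ) : ℝ := 1 / (1 + Real.exp (-a))

lemma sigmoid_mem_Icc (a : ℝ) : sigmoid a ∈ Set.Icc 0 1 := by
  unfold sigmoid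
  refine ⟨by positivity, ?_⟩
  rw [div_le_one (by positivity)]
  linarith [Real.exp_pos (-a)]

lemma IsIdempotentElem.sub_mul_mixture {R : Type*} [CommRing R] {h : R} (hh : IsIdempotentElem h)
    (p x₁ x₀ : R) :
    (h - p) * (h * x₁ + (1 - h) * x₀) = (1 - p) * (h * x₁) - p * (x₀ - h * x₀) := by
  linear_combination (x₁ - x₀) * hh.eq

lemma isIdempotentElem_indicator_one {Ω : Type*} (A : Set Ω) (ω : Ω) :
    IsIdempotentElem (A.indicator (1 : Ω → ℝ) ω) := by
  by_cases hω : ω ∈ A <;> simp [IsIdempotentElem, hω]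

lemma indicator_one_mul_eq_indicator {Ω : Type*} (A : Set Ω) (X : Ω → ℝ) (ω : Ω) :
    A.indicator 1 ω * X ω = A.indicator X ω := by
  by_cases hω : ω ∈ A <;> simp [hω]

lemma indicator_sub_mul_mixture {Ω : Type*} (A : Set Ω) (p : ℝ) (X₁ X₀ : Ω → ℝ) :
    (fun ω => (A.indicator 1 ω - p) * (A.indicator 1 ω * X₁ ω + (1 - A.indicator 1 ω) * X₀ ω))
      = fun ω => (1 - p) * A.indicator X₁ ω - p * (X₀ ω - A.indicator X₀ ω) := by
  ext ω
  rw [(isIdempotentElem_indicator_one A ω).sub_mul_mixture, indicator_one_mul_eq_indicator,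
    indicator_one_mul_eq_indicator]

lemma integral_mul_sub_const_of_integral_eq_zero {Ω : Type*} [MeasurableSpace Ω] {μ : Measure Ω}
    [IsFiniteMeasure μ] {g f : Ω → ℝ} (hg : Integrable g μ) (hg0 : ∫ ω, g ω ∂μ = 0)
    (hgf : Integrable (fun ω => g ω * f ω) μ) (c : ℝ) :
    ∫ ω, g ω * (f ω - c) ∂μ = ∫ ω, g ω * f ω ∂μ := by
  simp only [mul_sub]
  rw [integral_sub hgf (hg.mul_const c), integral_mul_const, hg0, zero_mul, sub_zero]

lemma measureReal_preimage_Iio_of_map_eq_uniform {Ω : Type*} [MeasurableSpace Ω]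
    {μ : Measure Ω} {z : Ω → ℝ} (hz : Measurable z)
    (hunif : μ.map z = volume.restrict (Set.Icc 0 1)) {s : ℝ} (hs : s ∈ Set.Icc 0 1) :
    μ.real (z ⁻¹' Set.Iio s) = s := by
  have hIco : Set.Iio s ∩ Set.Icc 0 1 = Set.Ico 0 s := by
    ext x
    simp only [Set.mem_inter_iff, Set.mem_Iio, Set.mem_Icc, Set.mem_Ico]
    grind
  rw [measureReal_def, ← Measure.map_apply hz measurableSet_Iio, hunif,
    Measure.restrict_apply measurableSet_Iio, hIco, Real.volume_Ico, sub_zero,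
    ENNReal.toReal_ofReal hs.1]

section EventIndicator

variable {Ω : Type*} [MeasurableSpace Ω] {μ : Measure Ω} {A : Set Ω} {X₁ X₀ : Ω → ℝ}

lemma integrable_indicator_sub_mul_mixture (hA : MeasurableSet A) (hX₁ : Integrable X₁ μ)
    (hX₀ : Integrable X₀ μ) (p : ℝ) :
    Integrable (fun ω => (A.indicator 1 ω - p) *
      (A.indicator 1 ω * X₁ ω + (1 - A.indicator 1 ω) * X₀ ω)) μ := by
  rw [indicator_sub_mul_mixture]
  exact ((hX₁.indicator hA).const_mul _).sub ((hX₀.sub' (hX₀.indicator hA)).const_mul _)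

lemma integral_indicator_one_sub_measureReal [IsProbabilityMeasure μ] (hA : MeasurableSet A) :
    ∫ ω, (A.indicator 1 ω - μ.real A) ∂μ = 0 := by
  rw [integral_sub ((integrable_const 1).indicator hA) (integrable_const _),
    integral_indicator_one hA, integral_const, probReal_univ, one_smul, sub_self]

lemma integral_indicator_of_indepFun (hA : MeasurableSet A) {X : Ω → ℝ}
    (hX : AEStronglyMeasurable X μ) (hind : IndepFun X (A.indicator (1 : Ω → ℝ)) μ) :
    ∫ ω, A.indicator X ω ∂μ = μ.real A * ∫ ω, X ω ∂μ := by
  simp only [← indicator_one_mul_eq_indicator A X]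
  rw [hind.symm.integral_fun_mul_eq_mul_integral
      ((stronglyMeasurable_const.indicator hA).aestronglyMeasurable) hX,
    integral_indicator_one hA]

theorem integral_indicator_sub_mul_mixture (hA : MeasurableSet A) (hX₁ : Integrable X₁ μ)
    (hX₀ : Integrable X₀ μ) (hind₁ : IndepFun X₁ (A.indicator (1 : Ω → ℝ)) μ)
    (hind₀ : IndepFun X₀ (A.indicator (1 : Ω → ℝ)) μ) :
    ∫ ω, (A.indicator 1 ω - μ.real A) * (A.indicator 1 ω * X₁ ω + (1 - A.indicator 1 ω) * X₀ ω) ∂μ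
      = μ.real A * (1 - μ.real A) * (∫ ω, X₁ ω ∂μ - ∫ ω, X₀ ω ∂μ) := by
  rw [indicator_sub_mul_mixture,
    integral_sub ((hX₁.indicator hA).const_mul _) ((hX₀.sub' (hX₀.indicator hA)).const_mul _),
    integral_const_mul, integral_const_mul, integral_sub hX₀ (hX₀.indicator hA),
    integral_indicator_of_indepFun hA hX₁.aestronglyMeasurable hind₁,
    integral_indicator_of_indepFun hA hX₀.aestronglyMeasurable hind₀]
  ring

end EventIndicator

/-- With `z` uniform on `[0,1]`, `h = 1_{z < σ(a)}`, and integrable losses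
`L₁, L₀` independent of `z`, `L = h·L₁ + (1 − h)·L₀`, the centered estimator satisfies,
for every constant `L̄`,
`E[(h − σ(a))·(L − L̄)] = E[(h − σ(a))·L] = σ(a)(1 − σ(a))·(E[L₁] − E[L₀])`. -/
theorem stmt4 {Ω : Type*} [MeasurableSpace Ω] (μ : Measure Ω) [IsProbabilityMeasure μ]
    (z : Ω → ℝ) (hz : Measurable z)
    (hunif : Measure.map z μ = volume.restrict (Set.Icc (0 : ℝ) 1))
    (a : ℝ) (h : Ω → ℝ) (hh : h = fun ω => if z ω < sigmoid a then 1 else 0)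
    (L₁ L₀ : Ω → ℝ) (hL₁ : Integrable L₁ μ) (hL₀ : Integrable L₀ μ)
    (hind₁ : IndepFun L₁ z μ) (hind₀ : IndepFun L₀ z μ)
    (L : Ω → ℝ) (hL : L = fun ω => h ω * L₁ ω + (1 - h ω) * L₀ ω) :
    ∀ Lbar : ℝ,
      (∫ ω, (h ω - sigmoid a) * (L ω - Lbar) ∂μ)
          = (∫ ω, (h ω - sigmoid a) * L ω ∂μ) ∧
      (∫ ω, (h ω - sigmoid a) * L ω ∂μ)
          = sigmoid a * (1 - sigmoid a) * ((∫ ω, L₁ ω ∂μ) - ∫ ω, L₀ ω ∂μ) := by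
  intro Lbar
  set A := z ⁻¹' Set.Iio (sigmoid a)
  have hA : MeasurableSet A := hz measurableSet_Iio
  have hPA : μ.real A = sigmoid a :=
    measureReal_preimage_Iio_of_map_eq_uniform hz hunif (sigmoid_mem_Icc a)
  have hhA : h = A.indicator 1 := by
    ext ω
    by_cases hω : z ω < sigmoid a <;> simp [hh, A, hω]
  have hindA (X : Ω → ℝ) (hX : IndepFun X z μ) : IndepFun X (A.indicator (1 : Ω → ℝ)) μ :=
    hX.comp (φ := id) (ψ := (Set.Iio (sigmoid a)).indicator 1) measurable_id
      (measurable_one.indicator measurableSet_Iio)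
  subst hL hhA
  rw [← hPA]
  exact ⟨integral_mul_sub_const_of_integral_eq_zero
      (((integrable_const 1).indicator hA).sub' (integrable_const _))
      (integral_indicator_one_sub_measureReal hA)
      (integrable_indicator_sub_mul_mixture hA hL₁ hL₀ _) Lbar,
    integral_indicator_sub_mul_mixture hA hL₁ hL₀ (hindA _ hind₁) (hindA _ hind₀)⟩
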